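/- Let K₀ = L²([2,3]) (with Lebesgue measure) and let T be the bounded multiplication operator on K₀ given by (Tf)(t) = t·f(t) for almost every t ∈ [2,3]. Let K = ℓ²(ℕ) (indexed from n = 1), let C and D be the diagonal operators on K with diagonals (1/n²)_n and (1/n³)_n respectively, and put L = K₀ ⊕ K and H = L ⊕ L. Then the systems (H; L ⊕ 0, graph(T ⊕ C)) and (H; L ⊕ 0, graph(T ⊕ D)) are not boundedly isomorphic, where T ⊕ C and T ⊕ D denote the direct sum operators on L = K₀ ⊕ K. -/

import Mathlib

/-!
A bounded isomorphism `V` of the two systems preserves `L ⊕ 0`, so it is block upper triangular;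
reading it off on the graphs gives an invertible `E` on `L` and bounded `P`, `Q` with
`P (T ⊕ C) = (T ⊕ D) E` and `Q (T ⊕ D) = (T ⊕ C) E⁻¹`. Because `T` is bounded below, the
`K`-corners `e`, `f` of `E`, `E⁻¹` are mutually inverse up to errors of size `‖D u‖` and `‖C u‖`,
and `‖C (f u)‖ ≲ ‖D u‖`. Hence `f` is bounded below on the tail `{u | u₀ = ⋯ = u_{k-1} = 0}`,
and the image of that tail has codimension at most `k + m` for a fixed `m`, so it meets the span of
the first `k + m + 1` basis vectors nontrivially. There `‖C w‖ ≳ ‖w‖ / k²`, while on the image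
`‖C (f u)‖ ≲ ‖u‖ / k³ ≲ ‖f u‖ / k³`: impossible for large `k`.
-/

noncomputable section

open MeasureTheory

abbrev μ23 : Measure ℝ := volume.restrict (Set.Icc (2 : ℝ) 3)

abbrev K₀ : Type := Lp ℂ 2 μ23

abbrev K : Type := lp (fun _ : ℕ => ℂ) 2

/-- The graph of the direct sum of a bounded operator T on K₀ and the diagonal operator
on K with diagonals `c`, as a subspace of (K₀ × K) × (K₀ × K). -/
def sumGraph (T : K₀ →L[ℂ] K₀) (c : ℕ → ℂ) : Submodule ℂ ((K₀ × K) × (K₀ × K)) where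
  carrier := {p | p.2.1 = T p.1.1 ∧ ∀ n, p.2.2 n = c n * p.1.2 n}
  add_mem' := by
    rintro p q ⟨hp1, hp2⟩ ⟨hq1, hq2⟩
    refine ⟨?_, fun n => ?_⟩
    · simp [Prod.fst_add, Prod.snd_add, hp1, hq1, map_add]
    · simp only [Prod.snd_add, Prod.fst_add, lp.coeFn_add, Pi.add_apply, hp2 n, hq2 n]
      ring
  zero_mem' := ⟨by simp, fun n => by simp [lp.coeFn_zero]⟩
  smul_mem' := by
    rintro z p ⟨hp1, hp2⟩
    refine ⟨?_, fun n => ?_⟩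
    · simp [Prod.smul_fst, Prod.smul_snd, hp1, _root_.map_smul]
    · simp only [Prod.smul_snd, Prod.smul_fst, lp.coeFn_smul, Pi.smul_apply, hp2 n,
        smul_eq_mul]
      ring

open ContinuousLinearMap
open scoped lp ENNReal InnerProductSpace

namespace TwoSubspaces

section Blocks

variable {𝕜 L : Type*} [NontriviallyNormedField 𝕜] [NormedAddCommGroup L] [NormedSpace 𝕜 L]

def graphFst (W : L × L →L[𝕜] L × L) (S : L →L[𝕜] L) : L →L[𝕜] L :=
  fst 𝕜 L L ∘L W ∘L (ContinuousLinearMap.id 𝕜 L).prod S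

def lowerRight (W : L × L →L[𝕜] L × L) : L →L[𝕜] L :=
  snd 𝕜 L L ∘L W ∘L inr 𝕜 L L

variable {W W' : L × L →L[𝕜] L × L} {S S' : L →L[𝕜] L}

lemma apply_mk_apply_of_mapsTo_graph
    (hW : Set.MapsTo W (S : L →ₗ[𝕜] L).graph (S' : L →ₗ[𝕜] L).graph) (x : L) :
    W (x, S x) = (graphFst W S x, S' (graphFst W S x)) :=
  Prod.ext rfl ((LinearMap.mem_graph_iff _ _).1 (hW ((LinearMap.mem_graph_iff _ _).2 rfl)))

lemma lowerRight_comp_eq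
    (hW₀ : Set.MapsTo W ((⊤ : Submodule 𝕜 L).prod (⊥ : Submodule 𝕜 L))
      ((⊤ : Submodule 𝕜 L).prod (⊥ : Submodule 𝕜 L)))
    (hW : Set.MapsTo W (S : L →ₗ[𝕜] L).graph (S' : L →ₗ[𝕜] L).graph) :
    lowerRight W ∘L S = S' ∘L graphFst W S := by
  ext x
  have h₀ : (W (x, 0)).2 = 0 := (Submodule.mem_bot 𝕜).1
    (Submodule.mem_prod.1 (hW₀ (Submodule.mem_prod.2 ⟨trivial, (Submodule.mem_bot 𝕜).2 rfl⟩))).2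
  have hsplit : ((0 : L), S x) = (x, S x) - (x, 0) := by simp
  change (W (0, S x)).2 = S' (W (x, S x)).1
  rw [hsplit, map_sub, Prod.snd_sub, h₀, sub_zero, apply_mk_apply_of_mapsTo_graph hW]

lemma graphFst_comp_graphFst (hWW' : W ∘L W' = ContinuousLinearMap.id 𝕜 (L × L))
    (hW' : Set.MapsTo W' (S' : L →ₗ[𝕜] L).graph (S : L →ₗ[𝕜] L).graph) :
    graphFst W S ∘L graphFst W' S' = ContinuousLinearMap.id 𝕜 L := by
  ext z
  change (W (graphFst W' S' z, S (graphFst W' S' z))).1 = z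
  rw [← apply_mk_apply_of_mapsTo_graph hW', ← comp_apply, hWW', id_apply]

lemma _root_.ContinuousLinearEquiv.mapsTo_symm_of_image_eq {M : Type*} [TopologicalSpace M]
    [AddCommMonoid M] [Module 𝕜 M] (V : M ≃L[𝕜] M) {s t : Set M} (h : V '' s = t) :
    Set.MapsTo V.symm t s := by
  rw [← h, V.image_eq_preimage_symm]
  exact Set.mapsTo_preimage _ _

-- Since `V` preserves `L × 0` it is block upper triangular, `V (x, y) = (V₁₁ x + V₁₂ y, V₂₂ y)`;
-- then `E = graphFst V S = V₁₁ + V₁₂ S` and `P = lowerRight V = V₂₂`.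
theorem exists_equiv_intertwining_of_image_eq (V : (L × L) ≃L[𝕜] (L × L))
    (hV₀ : V '' ((⊤ : Submodule 𝕜 L).prod (⊥ : Submodule 𝕜 L) : Set (L × L)) =
      ((⊤ : Submodule 𝕜 L).prod (⊥ : Submodule 𝕜 L) : Set (L × L)))
    (hV : V '' (S : L →ₗ[𝕜] L).graph = (S' : L →ₗ[𝕜] L).graph) :
    ∃ (E : L ≃L[𝕜] L) (P Q : L →L[𝕜] L), P ∘L S = S' ∘L E ∧ Q ∘L S' = S ∘L E.symm := by
  have hV₀' := hV₀ ▸ Set.mapsTo_image V _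
  have hV' := hV ▸ Set.mapsTo_image V _
  let E := ContinuousLinearEquiv.equivOfInverse' (graphFst (V : L × L →L[𝕜] L × L) S)
    (graphFst (V.symm : L × L →L[𝕜] L × L) S')
    (graphFst_comp_graphFst (by ext <;> simp) (V.mapsTo_symm_of_image_eq hV))
    (graphFst_comp_graphFst (by ext <;> simp) hV')
  exact ⟨E, _, _, lowerRight_comp_eq hV₀' hV',
    lowerRight_comp_eq (V.mapsTo_symm_of_image_eq hV₀) (V.mapsTo_symm_of_image_eq hV)⟩

end Blocks

section Corners

variable {𝕜 X Y : Type*} [NontriviallyNormedField 𝕜] [NormedAddCommGroup X] [NormedSpace 𝕜 X]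
  [NormedAddCommGroup Y] [NormedSpace 𝕜 Y] {T : X →L[𝕜] X} {C D : Y →L[𝕜] Y}
  {E F Q : X × Y →L[𝕜] X × Y}

def corner (E : X × Y →L[𝕜] X × Y) : Y →L[𝕜] Y := snd 𝕜 X Y ∘L E ∘L inr 𝕜 X Y

lemma norm_prodMap_apply_inr_le (hQ : Q ∘L T.prodMap D = T.prodMap C ∘L F) (y : Y) :
    ‖T.prodMap C (F (0, y))‖ ≤ ‖Q‖ * ‖D y‖ := by
  rw [← comp_apply, ← hQ, comp_apply]
  change ‖Q (T 0, D y)‖ ≤ _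
  rw [map_zero]
  simpa using Q.le_opNorm (0, D y)

lemma norm_apply_corner_le (hQ : Q ∘L T.prodMap D = T.prodMap C ∘L F) (y : Y) :
    ‖C (corner F y)‖ ≤ ‖Q‖ * ‖D y‖ :=
  (_root_.norm_snd_le _).trans (norm_prodMap_apply_inr_le hQ y)

-- `y - corner E (corner F y)` is the `Y`-part of `E (x, 0)`, where `x` is the `X`-part of
-- `F (0, y)`; `x` is small because `T` is bounded below and `T.prodMap C (F (0, y)) = Q (0, D y)`.
lemma norm_sub_corner_corner_le {c : ℝ} (hc : 0 ≤ c) (hT : ∀ x, ‖x‖ ≤ c * ‖T x‖)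
    (hEF : E ∘L F = ContinuousLinearMap.id 𝕜 (X × Y))
    (hQ : Q ∘L T.prodMap D = T.prodMap C ∘L F) (y : Y) :
    ‖y - corner E (corner F y)‖ ≤ ‖E‖ * c * ‖Q‖ * ‖D y‖ := by
  set p := F (0, y)
  have hy : (E p).2 = y := by rw [← comp_apply, hEF, id_apply]
  have hsplit : y - corner E (corner F y) = (E (p.1, 0)).2 :=
    calc y - corner E (corner F y) = (E p).2 - (E (0, p.2)).2 := by rw [hy]; rfl
      _ = (E (p.1, 0)).2 := by
          rw [sub_eq_iff_eq_add, ← Prod.snd_add, ← map_add, Prod.mk_add_mk, add_zero, zero_add]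
  have hp : ‖p.1‖ ≤ c * (‖Q‖ * ‖D y‖) :=
    (hT p.1).trans (by gcongr; exact (_root_.norm_fst_le _).trans (norm_prodMap_apply_inr_le hQ y))
  calc ‖y - corner E (corner F y)‖ ≤ ‖E‖ * ‖(p.1, (0 : Y))‖ := by
        rw [hsplit]; exact (_root_.norm_snd_le _).trans (E.le_opNorm _)
    _ ≤ ‖E‖ * (c * (‖Q‖ * ‖D y‖)) := by simpa using mul_le_mul_of_nonneg_left hp (norm_nonneg E)
    _ = ‖E‖ * c * ‖Q‖ * ‖D y‖ := by ring

end Corners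

section Hilbert

variable {𝕜 E V : Type*} [RCLike 𝕜] [NormedAddCommGroup E] [InnerProductSpace 𝕜 E]
  [AddCommGroup V] [Module 𝕜 V]

lemma orthogonal_range_inf_eq_bot_of_norm_sub_le (f : V →ₗ[𝕜] E) (e : E → V) {U : Submodule 𝕜 E}
    (h : ∀ u ∈ U, ‖u - f (e u)‖ ≤ 2⁻¹ * ‖u‖) : (LinearMap.range f)ᗮ ⊓ U = ⊥ := by
  refine (Submodule.eq_bot_iff _).2 fun ξ ⟨hξ, hU⟩ => norm_eq_zero.1 ?_
  have h₀ : ⟪f (e ξ), ξ⟫_𝕜 = 0 :=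
    (Submodule.mem_orthogonal _ _).1 hξ _ (LinearMap.mem_range_self f _)
  have : ‖ξ‖ ^ 2 ≤ 2⁻¹ * ‖ξ‖ ^ 2 :=
    calc ‖ξ‖ ^ 2 = RCLike.re ⟪ξ - f (e ξ), ξ⟫_𝕜 := by
          rw [inner_sub_left, h₀, sub_zero, inner_self_eq_norm_sq]
      _ ≤ ‖ξ - f (e ξ)‖ * ‖ξ‖ := re_inner_le_norm _ _
      _ ≤ 2⁻¹ * ‖ξ‖ * ‖ξ‖ := by gcongr; exact h ξ hU
      _ = 2⁻¹ * ‖ξ‖ ^ 2 := by ring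
  nlinarith [norm_nonneg ξ]

lemma finrank_le_finrank_orthogonal_of_forall_apply_mem {W : Submodule 𝕜 E}
    [W.HasOrthogonalProjection] [FiniteDimensional 𝕜 Wᗮ] (ι : V →ₗ[𝕜] E)
    (h : ∀ v, ι v ∈ W → v = 0) : Module.finrank 𝕜 V ≤ Module.finrank 𝕜 Wᗮ := by
  refine LinearMap.finrank_le_finrank_of_injective
    (f := (Wᗮ.orthogonalProjectionOnto : E →ₗ[𝕜] Wᗮ) ∘ₗ ι) (LinearMap.ker_eq_bot.1 ?_)
  refine LinearMap.ker_eq_bot'.2 fun v hv => h v ?_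
  rw [← W.orthogonal_orthogonal, ← Submodule.ker_orthogonalProjectionOnto]
  exact hv

end Hilbert

lemma norm_le_mul_norm_of_forall_norm_apply_le {x y : K} {a : ℝ} (ha : 0 ≤ a)
    (h : ∀ n, ‖x n‖ ≤ a * ‖y n‖) : ‖x‖ ≤ a * ‖y‖ := by
  have hay : ‖(a : ℂ) • y‖ = a * ‖y‖ := by
    rw [norm_smul, Complex.norm_real, Real.norm_of_nonneg ha]
  refine hay ▸ lp.norm_mono two_ne_zero fun n => ?_
  rw [lp.coeFn_smul, Pi.smul_apply, norm_smul, Complex.norm_real, Real.norm_of_nonneg ha]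
  exact h n

def diagonal (σ : ℓ^∞(ℕ, ℂ)) : K →L[ℂ] K :=
  LinearMap.mkContinuous
    { toFun := fun x => ⟨fun n => σ n * x n, ((lp.memℓp x).const_smul (‖σ‖ : ℂ)).mono' fun n => by
        rw [norm_mul, Pi.smul_apply, norm_smul, Complex.norm_real, norm_norm]
        exact mul_le_mul_of_nonneg_right (lp.norm_apply_le_norm ENNReal.top_ne_zero σ n)
          (norm_nonneg _)⟩
      map_add' := fun x y => lp.ext <| funext fun n => mul_add _ _ _
      map_smul' := fun c x => lp.ext <| funext fun n => mul_left_comm _ _ _ }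
    ‖σ‖ fun x => norm_le_mul_norm_of_forall_norm_apply_le (norm_nonneg σ) fun n => by
      change ‖σ n * x n‖ ≤ _
      rw [norm_mul]
      exact mul_le_mul_of_nonneg_right (lp.norm_apply_le_norm ENNReal.top_ne_zero σ n)
        (norm_nonneg _)

@[simp] lemma diagonal_apply (σ : ℓ^∞(ℕ, ℂ)) (x : K) (n : ℕ) : diagonal σ x n = σ n * x n := rfl

def head (m : ℕ) : K →ₗ[ℂ] (Fin m → ℂ) :=
  LinearMap.pi fun i : Fin m => lp.evalₗ (fun _ : ℕ => ℂ) 2 (i : ℕ)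

def tail (m : ℕ) : Submodule ℂ K := LinearMap.ker (head m)

lemma mem_tail {m : ℕ} {x : K} : x ∈ tail m ↔ ∀ n < m, x n = 0 := by
  simp [tail, head, funext_iff, Fin.forall_iff]

def extendByZero (M : ℕ) : (Fin M → ℂ) →ₗ[ℂ] K where
  toFun a := ⟨fun n => if h : n < M then a ⟨n, h⟩ else 0,
    (memℓp_zero ((Set.finite_Iio M).subset fun n hn => by
      by_contra h
      exact hn (dif_neg h))).of_exponent_ge bot_le⟩
  map_add' a b := lp.ext <| funext fun n => by
    change (if h : n < M then (a + b) ⟨n, h⟩ else 0) =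
      (if h : n < M then a ⟨n, h⟩ else 0) + (if h : n < M then b ⟨n, h⟩ else 0)
    split_ifs <;> simp
  map_smul' c a := lp.ext <| funext fun n => by
    change (if h : n < M then (c • a) ⟨n, h⟩ else 0) = c * (if h : n < M then a ⟨n, h⟩ else 0)
    split_ifs <;> simp

lemma extendByZero_apply_of_lt {M n : ℕ} (a : Fin M → ℂ) (h : n < M) :
    extendByZero M a n = a ⟨n, h⟩ := dif_pos h

lemma extendByZero_apply_of_le {M n : ℕ} (a : Fin M → ℂ) (h : M ≤ n) :
    extendByZero M a n = 0 := dif_neg h.not_gt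

lemma extendByZero_injective (M : ℕ) : Function.Injective (extendByZero M) :=
  fun a b hab => funext fun i => by
    simpa only [extendByZero_apply_of_lt _ i.isLt] using congrArg (fun x : K => x i) hab

lemma norm_one_div_natCast_add_one_pow (j n : ℕ) :
    ‖1 / ((n : ℂ) + 1) ^ j‖ = (((n : ℝ) + 1) ^ j)⁻¹ := by
  have hn : ‖(n : ℂ) + 1‖ = (n : ℝ) + 1 := by exact_mod_cast Complex.norm_natCast (n + 1)
  rw [norm_div, norm_one, norm_pow, hn, one_div]

-- Lean's index `n` is the paper's `n + 1`.
def invPow (j : ℕ) : ℓ^∞(ℕ, ℂ) :=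
  ⟨fun n => 1 / ((n : ℂ) + 1) ^ j, memℓp_infty ⟨1, by
    rintro _ ⟨n, rfl⟩
    change ‖1 / ((n : ℂ) + 1) ^ j‖ ≤ 1
    rw [norm_one_div_natCast_add_one_pow]
    exact inv_le_one_of_one_le₀ (one_le_pow₀ (by simp))⟩⟩

lemma norm_invPow_apply_le {j k n : ℕ} (h : k ≤ n) : ‖invPow j n‖ ≤ (((k : ℝ) + 1) ^ j)⁻¹ := by
  change ‖1 / ((n : ℂ) + 1) ^ j‖ ≤ _
  rw [norm_one_div_natCast_add_one_pow]
  gcongr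

lemma inv_pow_le_norm_invPow_apply {j M n : ℕ} (h : n < M) : ((M : ℝ) ^ j)⁻¹ ≤ ‖invPow j n‖ := by
  change _ ≤ ‖1 / ((n : ℂ) + 1) ^ j‖
  rw [norm_one_div_natCast_add_one_pow]
  gcongr
  exact_mod_cast h

lemma norm_diagonal_invPow_le_of_mem_tail {j k : ℕ} {x : K} (hx : x ∈ tail k) :
    ‖diagonal (invPow j) x‖ ≤ (((k : ℝ) + 1) ^ j)⁻¹ * ‖x‖ :=
  norm_le_mul_norm_of_forall_norm_apply_le (by positivity) fun n => by
    rw [diagonal_apply, norm_mul]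
    rcases lt_or_ge n k with h | h
    · simp [mem_tail.1 hx n h]
    · gcongr
      exact norm_invPow_apply_le h

lemma norm_le_pow_mul_norm_diagonal_invPow {j M : ℕ} {x : K} (hx : ∀ n, M ≤ n → x n = 0) :
    ‖x‖ ≤ (M : ℝ) ^ j * ‖diagonal (invPow j) x‖ :=
  norm_le_mul_norm_of_forall_norm_apply_le (by positivity) fun n => by
    rw [diagonal_apply, norm_mul, ← mul_assoc]
    rcases lt_or_ge n M with h | h
    · have hM : (0 : ℝ) < (M : ℝ) ^ j := pow_pos (by exact_mod_cast (n.zero_le.trans_lt h)) j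
      have h1 : 1 ≤ (M : ℝ) ^ j * ‖invPow j n‖ := by
        rw [← inv_le_iff_one_le_mul₀' hM]
        exact inv_pow_le_norm_invPow_apply h
      exact le_mul_of_one_le_left (norm_nonneg _) h1
    · simp [hx n h]

-- `ξ ⊥ f (tail k)` says that `f† ξ ⊥ tail k`; if moreover the first `k` coordinates of `f† ξ`
-- vanish, then `f† ξ = 0`, i.e. `ξ ⊥ range f`.
lemma finiteDimensional_and_finrank_orthogonal_map_tail_le (f : K →L[ℂ] K) {k m : ℕ}
    (hf : f.rangeᗮ ⊓ tail m = ⊥) :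
    FiniteDimensional ℂ ((tail k).map (f : K →ₗ[ℂ] K))ᗮ ∧
      Module.finrank ℂ ((tail k).map (f : K →ₗ[ℂ] K))ᗮ ≤ k + m := by
  let g : K →ₗ[ℂ] (Fin k → ℂ) × (Fin m → ℂ) :=
    ((head k).comp ((adjoint f : K →L[ℂ] K) : K →ₗ[ℂ] K)).prod (head m)
  have hdisj : Disjoint ((tail k).map (f : K →ₗ[ℂ] K))ᗮ (LinearMap.ker g) := by
    refine LinearMap.disjoint_ker.2 fun ξ hξ hgξ => ?_
    simp only [g, LinearMap.prod_apply, Function.prod, Prod.mk_eq_zero, LinearMap.comp_apply] at hgξ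
    have hadj : adjoint f ξ ∈ tail k ⊓ (tail k)ᗮ := by
      refine ⟨hgξ.1, (Submodule.mem_orthogonal _ _).2 fun u hu => ?_⟩
      rw [adjoint_inner_right]
      exact (Submodule.mem_orthogonal _ _).1 hξ _ (Submodule.mem_map_of_mem hu)
    rw [Submodule.inf_orthogonal_eq_bot, Submodule.mem_bot] at hadj
    have hrange : ξ ∈ f.rangeᗮ ⊓ tail m := ⟨by rw [orthogonal_range]; exact hadj, hgξ.2⟩
    rwa [hf, Submodule.mem_bot] at hrange
  have hinj := LinearMap.injective_domRestrict_iff.2 hdisj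
  exact ⟨Module.Finite.of_injective _ hinj,
    (LinearMap.finrank_le_finrank_of_injective hinj).trans (by simp)⟩

section Endgame

variable {e f : K →L[ℂ] K}

lemma norm_le_two_mul_norm_apply_of_mem_tail {A : ℝ} (hA : 0 ≤ A)
    (hI : ∀ u, ‖u - e (f u)‖ ≤ A * ‖diagonal (invPow 3) u‖) {k : ℕ}
    (hk : 2 * A ≤ ((k : ℝ) + 1) ^ 3) {u : K} (hu : u ∈ tail k) : ‖u‖ ≤ 2 * ‖e‖ * ‖f u‖ := by
  have hnear : ‖u - e (f u)‖ ≤ 2⁻¹ * ‖u‖ :=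
    calc ‖u - e (f u)‖ ≤ A * ‖diagonal (invPow 3) u‖ := hI u
      _ ≤ A * ((((k : ℝ) + 1) ^ 3)⁻¹ * ‖u‖) := by
          gcongr; exact norm_diagonal_invPow_le_of_mem_tail hu
      _ ≤ 2⁻¹ * ‖u‖ := by
          rw [← mul_assoc]
          gcongr
          rw [← div_eq_mul_inv, div_le_iff₀ (by positivity)]
          linarith
  linarith [norm_le_insert' u (e (f u)), e.le_opNorm (f u)]

lemma norm_diagonal_le_of_mem_closure_map_tail {β G : ℝ} (hβ : 0 ≤ β)
    (hIII : ∀ u, ‖diagonal (invPow 2) (f u)‖ ≤ β * ‖diagonal (invPow 3) u‖) {k : ℕ}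
    (hbelow : ∀ u ∈ tail k, ‖u‖ ≤ G * ‖f u‖) {y : K}
    (hy : y ∈ ((tail k).map (f : K →ₗ[ℂ] K)).topologicalClosure) :
    ‖diagonal (invPow 2) y‖ ≤ β * G / ((k : ℝ) + 1) ^ 3 * ‖y‖ := by
  have hclosed : IsClosed {y : K | ‖diagonal (invPow 2) y‖ ≤ β * G / ((k : ℝ) + 1) ^ 3 * ‖y‖} :=
    isClosed_le (by fun_prop) (by fun_prop)
  refine closure_minimal ?_ hclosed hy
  rintro _ ⟨u, hu, rfl⟩
  calc ‖diagonal (invPow 2) (f u)‖ ≤ β * ‖diagonal (invPow 3) u‖ := hIII u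
    _ ≤ β * ((((k : ℝ) + 1) ^ 3)⁻¹ * (G * ‖f u‖)) := by
        gcongr
        exact (norm_diagonal_invPow_le_of_mem_tail hu).trans (by gcongr; exact hbelow u hu)
    _ = β * G / ((k : ℝ) + 1) ^ 3 * ‖f u‖ := by ring

lemma orthogonal_range_inf_tail_eq_bot {B : ℝ} (hB : 0 ≤ B)
    (hII : ∀ u, ‖u - f (e u)‖ ≤ B * ‖diagonal (invPow 2) u‖) {m : ℕ} (hm : 2 * B ≤ m) :
    f.rangeᗮ ⊓ tail m = ⊥ :=
  orthogonal_range_inf_eq_bot_of_norm_sub_le (f : K →ₗ[ℂ] K) e fun ξ hξ =>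
    calc ‖ξ - f (e ξ)‖ ≤ B * ‖diagonal (invPow 2) ξ‖ := hII ξ
      _ ≤ B * ((((m : ℝ) + 1) ^ 2)⁻¹ * ‖ξ‖) := by
          gcongr; exact norm_diagonal_invPow_le_of_mem_tail hξ
      _ ≤ 2⁻¹ * ‖ξ‖ := by
          rw [← mul_assoc]
          gcongr
          rw [← div_eq_mul_inv, div_le_iff₀ (by positivity)]
          nlinarith

lemma natCast_sq_mul_div_pow_three_lt_one {c : ℝ} (hc : 0 ≤ c) {k m : ℕ}
    (hk : c * ((m : ℝ) + 1) ^ 2 < (k : ℝ) + 1) :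
    ((k + m + 1 : ℕ) : ℝ) ^ 2 * (c / ((k : ℝ) + 1) ^ 3) < 1 := by
  rw [mul_div_assoc', div_lt_one (by positivity)]
  push_cast
  calc ((k : ℝ) + m + 1) ^ 2 * c ≤ (((m : ℝ) + 1) * ((k : ℝ) + 1)) ^ 2 * c := by
        gcongr; nlinarith
    _ = ((k : ℝ) + 1) ^ 2 * (c * ((m : ℝ) + 1) ^ 2) := by ring
    _ < ((k : ℝ) + 1) ^ 2 * ((k : ℝ) + 1) := by gcongr
    _ = ((k : ℝ) + 1) ^ 3 := by ring

theorem false_of_corner_estimates {A B β : ℝ} (hA : 0 ≤ A) (hB : 0 ≤ B) (hβ : 0 ≤ β)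
    (hI : ∀ u, ‖u - e (f u)‖ ≤ A * ‖diagonal (invPow 3) u‖)
    (hII : ∀ u, ‖u - f (e u)‖ ≤ B * ‖diagonal (invPow 2) u‖)
    (hIII : ∀ u, ‖diagonal (invPow 2) (f u)‖ ≤ β * ‖diagonal (invPow 3) u‖) : False := by
  obtain ⟨m, hm⟩ := exists_nat_ge (2 * B)
  set G := 2 * ‖e‖
  obtain ⟨k, hk⟩ := exists_nat_gt (max (2 * A) (β * G * ((m : ℝ) + 1) ^ 2))
  rw [max_lt_iff] at hk
  have hbelow : ∀ u ∈ tail k, ‖u‖ ≤ G * ‖f u‖ := fun u hu =>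
    norm_le_two_mul_norm_apply_of_mem_tail hA hI
      (by nlinarith [le_self_pow₀ (by simp : (1 : ℝ) ≤ k + 1) (by norm_num : 3 ≠ 0)]) hu
  set Y := (tail k).map (f : K →ₗ[ℂ] K)
  obtain ⟨hfin, hrank⟩ := finiteDimensional_and_finrank_orthogonal_map_tail_le f (k := k)
    (orthogonal_range_inf_tail_eq_bot hB hII hm)
  rw [← Y.orthogonal_closure] at hfin hrank
  have hsmall := natCast_sq_mul_div_pow_three_lt_one (by positivity) (hk.2.trans (by linarith))
  have hM := finrank_le_finrank_orthogonal_of_forall_apply_mem (W := Y.topologicalClosure)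
    (extendByZero (k + m + 1)) fun a ha => extendByZero_injective _ <| by
      have h₁ := norm_diagonal_le_of_mem_closure_map_tail hβ hIII hbelow ha
      have h₂ := norm_le_pow_mul_norm_diagonal_invPow (j := 2) fun n hn =>
        extendByZero_apply_of_le a hn
      rw [map_zero, ← norm_eq_zero]
      nlinarith [norm_nonneg (extendByZero (k + m + 1) a)]
  simp only [Module.finrank_fin_fun] at hM
  omega

end Endgame

lemma norm_le_inv_two_mul_norm_of_ae_eq_mul {T : K₀ →L[ℂ] K₀}
    (hT : ∀ f : K₀, ∀ᵐ x ∂μ23, ((T f : K₀) : ℝ → ℂ) x = (x : ℂ) * (f : ℝ → ℂ) x) (g : K₀) :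
    ‖g‖ ≤ 2⁻¹ * ‖T g‖ := by
  refine Lp.norm_le_mul_norm_of_ae_le_mul ?_
  filter_upwards [hT g, ae_restrict_mem measurableSet_Icc] with x hTx hx
  rw [hTx, norm_mul, Complex.norm_real, Real.norm_of_nonneg (by linarith [hx.1])]
  nlinarith [hx.1, norm_nonneg ((g : ℝ → ℂ) x)]

lemma coe_sumGraph (T : K₀ →L[ℂ] K₀) (σ : ℓ^∞(ℕ, ℂ)) :
    (sumGraph T σ : Set ((K₀ × K) × (K₀ × K))) =
      ((T.prodMap (diagonal σ) : K₀ × K →ₗ[ℂ] K₀ × K).graph : Set ((K₀ × K) × (K₀ × K))) := by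
  ext p
  simp [sumGraph, LinearMap.mem_graph_iff, Prod.ext_iff, lp.ext_iff, funext_iff]

end TwoSubspaces

open TwoSubspaces in
theorem continuous_spectrum_sum_graphs_not_boundedly_isomorphic
    (T : K₀ →L[ℂ] K₀)
    (hT : ∀ f : K₀, ∀ᵐ x ∂μ23, ((T f : K₀) : ℝ → ℂ) x = (x : ℂ) * (f : ℝ → ℂ) x) :
    ¬ ∃ V : ((K₀ × K) × (K₀ × K)) ≃L[ℂ] ((K₀ × K) × (K₀ × K)),
        V '' (((⊤ : Submodule ℂ (K₀ × K)).prod (⊥ : Submodule ℂ (K₀ × K))) :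
            Set ((K₀ × K) × (K₀ × K))) =
          (((⊤ : Submodule ℂ (K₀ × K)).prod (⊥ : Submodule ℂ (K₀ × K))) :
            Set ((K₀ × K) × (K₀ × K))) ∧
        V '' ((sumGraph T fun n : ℕ => 1 / ((n : ℂ) + 1) ^ 2) : Set ((K₀ × K) × (K₀ × K))) =
          ((sumGraph T fun n : ℕ => 1 / ((n : ℂ) + 1) ^ 3) : Set ((K₀ × K) × (K₀ × K))) := by
  rintro ⟨V, hV₀, hV⟩
  change V '' (sumGraph T (invPow 2) : Set _) = sumGraph T (invPow 3) at hV
  rw [coe_sumGraph, coe_sumGraph] at hV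
  obtain ⟨E, P, Q, hP, hQ⟩ := exists_equiv_intertwining_of_image_eq V hV₀ hV
  have hT' := norm_le_inv_two_mul_norm_of_ae_eq_mul hT
  exact false_of_corner_estimates (e := corner E) (f := corner E.symm)
    (by positivity) (by positivity) (norm_nonneg Q)
    (norm_sub_corner_corner_le (by norm_num) hT' (by simp) hQ)
    (norm_sub_corner_corner_le (by norm_num) hT' (by simp) hP)
    (norm_apply_corner_le hQ)
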